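/- Let M ≻ 0 be symmetric positive definite and t ∈ ℝ. Then M + t·E_{11} ⪰ 0 if and only if t ≥ -1/((M^{-1})_{11}). Equivalently, by the Schur complement, M + t E_{11} ⪰ 0 iff M_{11} + t ≥ b^T C^{-1} b, where M = [[M_{11}, b^T],[b, C]] is the block partition isolating the (1,1) entry. -/

import Mathlib

/-!
Write `M` in block form `[[M₀₀, bᵀ], [b, C]]` with `C ≻ 0`. By the Schur complement criterion,
`M + t E₀₀ ⪰ 0` iff `M₀₀ + t - bᵀ C⁻¹ b ≥ 0`, since adding `t E₀₀` changes neither `b` nor `C`.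
By Cramer's rule `(M⁻¹)₀₀ = det C / det M`, and the Schur determinant formula
`det M = det C · (M₀₀ - bᵀ C⁻¹ b)` identifies `1 / (M⁻¹)₀₀` with the same Schur complement.
-/

open Matrix

def finOneSumEquiv (m : ℕ) : Fin 1 ⊕ Fin m ≃ Fin (m + 1) where
  toFun := Sum.elim (fun _ => 0) Fin.succ
  invFun := Fin.cases (Sum.inl 0) Sum.inr
  left_inv := by rintro (i | i) <;> simp [Fin.eq_zero]
  right_inv i := by induction i using Fin.cases <;> simp

namespace Matrix

variable {m : ℕ}

theorem submatrix_finOneSumEquiv {α : Type*} (M : Matrix (Fin (m + 1)) (Fin (m + 1)) α) :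
    M.submatrix (finOneSumEquiv m) (finOneSumEquiv m) =
      fromBlocks (of fun _ _ => M 0 0) (replicateRow (Fin 1) fun j => M 0 j.succ)
        (replicateCol (Fin 1) fun i => M i.succ 0) (M.submatrix Fin.succ Fin.succ) := by
  ext (i | i) (j | j) <;> simp [finOneSumEquiv, Fin.eq_zero]

theorem replicateRow_mul_mul_replicateCol_apply {n ι R : Type*} [Fintype n] [NonUnitalSemiring R]
    (u v : n → R) (A : Matrix n n R) (i j : ι) :
    (replicateRow ι u * A * replicateCol ι v) i j = u ⬝ᵥ A *ᵥ v := by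
  rw [Matrix.mul_assoc, ← replicateCol_mulVec, replicateRow_mul_replicateCol_apply]

theorem det_eq_det_submatrix_succ_mul {K : Type*} [Field K]
    (M : Matrix (Fin (m + 1)) (Fin (m + 1)) K) (hC : (M.submatrix Fin.succ Fin.succ).det ≠ 0) :
    M.det = (M.submatrix Fin.succ Fin.succ).det *
      (M 0 0 - (fun j => M 0 j.succ) ⬝ᵥ
        (M.submatrix Fin.succ Fin.succ)⁻¹ *ᵥ fun i => M i.succ 0) := by
  have := (M.submatrix Fin.succ Fin.succ).invertibleOfIsUnitDet hC.isUnit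
  rw [← det_submatrix_equiv_self (finOneSumEquiv m), submatrix_finOneSumEquiv, det_fromBlocks₂₂,
    invOf_eq_nonsing_inv, det_fin_one]
  simp [replicateRow_mul_mul_replicateCol_apply]

theorem inv_apply_zero_zero {K : Type*} [Field K] (M : Matrix (Fin (m + 1)) (Fin (m + 1)) K) :
    M⁻¹ 0 0 = (M.submatrix Fin.succ Fin.succ).det / M.det := by
  simp [inv_def, Ring.inverse_eq_inv', adjugate_fin_succ_eq_det_submatrix, div_eq_inv_mul]

theorem one_div_inv_apply_zero_zero {K : Type*} [Field K]
    (M : Matrix (Fin (m + 1)) (Fin (m + 1)) K) (hC : (M.submatrix Fin.succ Fin.succ).det ≠ 0) :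
    1 / M⁻¹ 0 0 =
      M 0 0 - (fun j => M 0 j.succ) ⬝ᵥ
        (M.submatrix Fin.succ Fin.succ)⁻¹ *ᵥ fun i => M i.succ 0 := by
  rw [inv_apply_zero_zero, one_div_div, det_eq_det_submatrix_succ_mul M hC,
    mul_div_cancel_left₀ _ hC]

theorem posSemidef_iff_le_of_posDef_submatrix_succ {M : Matrix (Fin (m + 1)) (Fin (m + 1)) ℝ}
    (hM : M.IsHermitian) (hC : (M.submatrix Fin.succ Fin.succ).PosDef) :
    M.PosSemidef ↔
      (fun i => M i.succ 0) ⬝ᵥ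
        (M.submatrix Fin.succ Fin.succ)⁻¹ *ᵥ (fun i => M i.succ 0) ≤ M 0 0 := by
  have := (M.submatrix Fin.succ Fin.succ).invertibleOfIsUnitDet hC.det_pos.ne'.isUnit
  set b : Fin m → ℝ := fun i => M i.succ 0
  have hrow : (replicateRow (Fin 1) fun j : Fin m => M 0 j.succ) = replicateRow (Fin 1) b := by
    ext _ j
    simpa using hM.apply j.succ 0
  have hcol : replicateCol (Fin 1) b = (replicateRow (Fin 1) b)ᴴ := by
    simp
  rw [← posSemidef_submatrix_equiv (finOneSumEquiv m), submatrix_finOneSumEquiv, hrow, hcol,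
    PosDef.fromBlocks₂₂ _ _ hC]
  have hschur : (of fun _ _ => M 0 0) -
      replicateRow (Fin 1) b * (M.submatrix Fin.succ Fin.succ)⁻¹ * replicateCol (Fin 1) b =
      diagonal fun _ => M 0 0 - b ⬝ᵥ (M.submatrix Fin.succ Fin.succ)⁻¹ *ᵥ b := by
    ext i j
    simp [Fin.fin_one_eq_zero i, Fin.fin_one_eq_zero j, replicateRow_mul_mul_replicateCol_apply]
  rw [← hcol, hschur, posSemidef_diagonal_iff, Fin.forall_fin_one, sub_nonneg]

end Matrix

theorem stmt9 (m : ℕ) (M : Matrix (Fin (m + 1)) (Fin (m + 1)) ℝ)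
    (hM : M.PosDef) (t : ℝ)
    (b : Fin m → ℝ) (hb : ∀ i, b i = M i.succ 0)
    (C : Matrix (Fin m) (Fin m) ℝ) (hC : C = M.submatrix Fin.succ Fin.succ) :
    ((M + t • single 0 0 (1 : ℝ)).PosSemidef ↔ -(1 / (M⁻¹ 0 0)) ≤ t) ∧
    ((M + t • single 0 0 (1 : ℝ)).PosSemidef ↔ b ⬝ᵥ C⁻¹ *ᵥ b ≤ M 0 0 + t) := by
  obtain rfl : b = fun i => M i.succ 0 := funext hb
  have hCpd : C.PosDef := hC ▸ hM.submatrix (Fin.succ_injective m)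
  set N := M + t • single 0 0 (1 : ℝ)
  have hNsub : N.submatrix Fin.succ Fin.succ = C := by
    ext i j
    simp [N, hC, (Fin.succ_ne_zero _).symm]
  have hNherm : N.IsHermitian := hM.isHermitian.add (by simp [IsHermitian, smul_single])
  have hN :
      N.PosSemidef ↔ (fun i => M i.succ 0) ⬝ᵥ C⁻¹ *ᵥ (fun i => M i.succ 0) ≤ M 0 0 + t := by
    rw [posSemidef_iff_le_of_posDef_submatrix_succ hNherm (hNsub ▸ hCpd), hNsub]
    simp [N, (Fin.succ_ne_zero _).symm]
  have hrow : (fun j : Fin m => M 0 j.succ) = fun i => M i.succ 0 :=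
    funext fun j => hM.isHermitian.apply j.succ 0
  refine ⟨hN.trans ?_, hN⟩
  rw [one_div_inv_apply_zero_zero M (hC ▸ hCpd.det_pos.ne'), hrow, ← hC]
  constructor <;> intro h <;> linarith
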